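/- With the notation of the restricted eigenvalue conditions, for integers 1 ≤ s ≤ p/2 and m with m ≥ s and s+m ≤ p, define K(s,m,k₀,X)⁻¹ as the minimum over admissible nonzero v (i.e., ‖v_{J₀ᶜ}‖₁ ≤ k₀‖v_{J₀}‖₁ for some |J₀| ≤ s) of ‖Xv‖₂/(√n ‖v_{J₀m}‖₂), where J₀m = J₀ ∪ J_m and J_m indexes the m largest coordinates of v outside J₀. Then K(s,k₀,X) ≤ K(s,m,k₀,X) ≤ √(2+k₀²) · K(s,k₀,X). -/

import Mathlib

/-!
Enlarging `J₀` to `J₀ ∪ J_m` only increases the denominator, which gives the first inequality.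
For the second, replace `J₀` by the set `T` of the `|J₀|` largest coordinates of `v`: this only
increases `‖v_T‖₁`, so the cone condition `‖v_{Tᶜ}‖₁ ≤ k₀ ‖v_T‖₁` still holds. Every coordinate
outside `T` satisfies `|T| |v_j| ≤ ‖v_T‖₁`, hence, by Cauchy–Schwarz,
`|T| ‖v_{Tᶜ}‖₂² ≤ ‖v_T‖₁ ‖v_{Tᶜ}‖₁ ≤ k₀ ‖v_T‖₁² ≤ k₀ |T| ‖v_T‖₂²`.
Thus `‖v_{J₀m}‖₂² ≤ ‖v‖₂² ≤ (1 + k₀) ‖v_T‖₂² ≤ (2 + k₀²) ‖v_T‖₂²`.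
-/

open Finset

noncomputable def l1 {p : ℕ} (v : Fin p → ℝ) : ℝ := ∑ i, |v i|
noncomputable def l2 {p : ℕ} (v : Fin p → ℝ) : ℝ := Real.sqrt (∑ i, (v i) ^ 2)

def restr {p : ℕ} (T : Finset (Fin p)) (v : Fin p → ℝ) : Fin p → ℝ :=
  fun i => if i ∈ T then v i else 0

/-- The set of ratios ‖Xv‖₂/(√n ‖v_{J₀}‖₂) over admissible pairs (J₀, v). -/
def ratios1 (n p s : ℕ) (k0 : ℝ) (X : Matrix (Fin n) (Fin p) ℝ) : Set ℝ :=
  { r | ∃ (J0 : Finset (Fin p)) (v : Fin p → ℝ), J0.card ≤ s ∧ v ≠ 0 ∧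
      l1 (restr J0ᶜ v) ≤ k0 * l1 (restr J0 v) ∧
      r = l2 (X.mulVec v) / (Real.sqrt n * l2 (restr J0 v)) }

/-- K(s,k₀,X) := (inf of the ratios)⁻¹. -/
noncomputable def Kre (n p s : ℕ) (k0 : ℝ) (X : Matrix (Fin n) (Fin p) ℝ) : ℝ :=
  (sInf (ratios1 n p s k0 X))⁻¹

/-- Ratios ‖Xv‖₂/(√n ‖v_{J₀m}‖₂), where J₀m = J₀ ∪ J_m and J_m indexes the
m largest coordinates of v outside J₀. -/
def ratiosM (n p s m : ℕ) (k0 : ℝ) (X : Matrix (Fin n) (Fin p) ℝ) : Set ℝ :=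
  { r | ∃ (J0 Jm : Finset (Fin p)) (v : Fin p → ℝ), J0.card ≤ s ∧ v ≠ 0 ∧
      l1 (restr J0ᶜ v) ≤ k0 * l1 (restr J0 v) ∧
      Jm.card = min m (p - J0.card) ∧ Disjoint Jm J0 ∧
      (∀ i ∈ Jm, ∀ j, j ∉ J0 → j ∉ Jm → |v j| ≤ |v i|) ∧
      r = l2 (X.mulVec v) / (Real.sqrt n * l2 (restr (J0 ∪ Jm) v)) }

/-- K(s,m,k₀,X) := (inf of those ratios)⁻¹. -/
noncomputable def KreM (n p s m : ℕ) (k0 : ℝ) (X : Matrix (Fin n) (Fin p) ℝ) : ℝ :=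
  (sInf (ratiosM n p s m k0 X))⁻¹

section LargestCoordinates

variable {ι : Type*} [DecidableEq ι]

lemma exists_subset_card_eq_forall_le {α : Type*} [LinearOrder α] (S : Finset ι) (f : ι → α)
    {k : ℕ} (hk : k ≤ #S) : ∃ T ⊆ S, #T = k ∧ ∀ i ∈ T, ∀ j ∈ S, j ∉ T → f j ≤ f i := by
  induction k with
  | zero => exact ⟨∅, empty_subset S, rfl, by simp⟩
  | succ k ih =>
    obtain ⟨T, hTS, hTcard, hTtop⟩ := ih (Nat.le_of_succ_le hk)
    have hne : (S \ T).Nonempty := by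
      rw [← card_pos, card_sdiff_of_subset hTS]
      omega
    obtain ⟨x, hx, hxmax⟩ := (S \ T).exists_max_image f hne
    obtain ⟨hxS, hxT⟩ := mem_sdiff.1 hx
    refine ⟨insert x T, insert_subset hxS hTS, by rw [card_insert_of_notMem hxT, hTcard], ?_⟩
    intro i hi j hjS hj
    have hjT : j ∉ T := fun h => hj (mem_insert_of_mem h)
    rcases mem_insert.1 hi with rfl | hiT
    · exact hxmax j (mem_sdiff.2 ⟨hjS, hjT⟩)
    · exact hTtop i hiT j hjS hjT

lemma sum_le_sum_of_card_le_of_forall_le {f : ι → ℝ} (hf : ∀ i, 0 ≤ f i) {A T : Finset ι}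
    (hcard : #A ≤ #T) (htop : ∀ i ∈ T, ∀ j ∉ T, f j ≤ f i) :
    ∑ i ∈ A, f i ≤ ∑ i ∈ T, f i := by
  rw [← sum_inter_add_sum_sdiff A T, ← sum_inter_add_sum_sdiff T A, inter_comm T A]
  gcongr ∑ i ∈ A ∩ T, f i + ?_
  rcases (A \ T).eq_empty_or_nonempty with hAT | hAT
  · rw [hAT, sum_empty]
    exact sum_nonneg fun i _ => hf i
  obtain ⟨j₀, hj₀, hmax⟩ := (A \ T).exists_max_image f hAT
  calc ∑ j ∈ A \ T, f j ≤ #(A \ T) • f j₀ := sum_le_card_nsmul _ _ _ hmax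
    _ ≤ #(T \ A) • f j₀ := nsmul_le_nsmul_left (hf j₀) (card_sdiff_le_card_sdiff_iff.2 hcard)
    _ ≤ ∑ i ∈ T \ A, f i :=
      card_nsmul_le_sum _ _ _ fun i hi => htop i (mem_sdiff.1 hi).1 j₀ (mem_sdiff.1 hj₀).2

end LargestCoordinates

lemma sum_sq_le_mul_sum_sq_of_forall_abs_le {ι : Type*} {T U : Finset ι} {v : ι → ℝ} {k0 : ℝ}
    (hk0 : 0 ≤ k0) (hT : T.Nonempty) (htop : ∀ i ∈ T, ∀ j ∈ U, |v j| ≤ |v i|)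
    (hcone : ∑ j ∈ U, |v j| ≤ k0 * ∑ i ∈ T, |v i|) :
    ∑ j ∈ U, v j ^ 2 ≤ k0 * ∑ i ∈ T, v i ^ 2 := by
  set L := ∑ i ∈ T, |v i|
  have hL : 0 ≤ L := sum_nonneg fun i _ => abs_nonneg _
  have hcard : (0 : ℝ) < #T := by exact_mod_cast hT.card_pos
  have hle_avg : ∀ j ∈ U, #T * |v j| ≤ L := fun j hj => by
    simpa using card_nsmul_le_sum T (fun i => |v i|) _ fun i hi => htop i hi j hj
  have hCS : L ^ 2 ≤ #T * ∑ i ∈ T, v i ^ 2 := by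
    simpa only [sq_abs] using sq_sum_le_card_mul_sum_sq (s := T) (f := fun i => |v i|)
  refine le_of_mul_le_mul_left ?_ hcard
  calc #T * ∑ j ∈ U, v j ^ 2 = ∑ j ∈ U, #T * |v j| * |v j| := by
        rw [mul_sum]
        exact sum_congr rfl fun j _ => by rw [mul_assoc, ← sq, sq_abs]
    _ ≤ ∑ j ∈ U, L * |v j| :=
        sum_le_sum fun j hj => mul_le_mul_of_nonneg_right (hle_avg j hj) (abs_nonneg _)
    _ = L * ∑ j ∈ U, |v j| := (mul_sum _ _ _).symm
    _ ≤ L * (k0 * L) := mul_le_mul_of_nonneg_left hcone hL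
    _ = k0 * L ^ 2 := by ring
    _ ≤ k0 * (#T * ∑ i ∈ T, v i ^ 2) := mul_le_mul_of_nonneg_left hCS hk0
    _ = #T * (k0 * ∑ i ∈ T, v i ^ 2) := by ring

section Norms

variable {p : ℕ}

lemma l1_restr (T : Finset (Fin p)) (v : Fin p → ℝ) : l1 (restr T v) = ∑ i ∈ T, |v i| := by
  simp [l1, restr, apply_ite, sum_ite_mem]

lemma l2_restr (T : Finset (Fin p)) (v : Fin p → ℝ) :
    l2 (restr T v) = √(∑ i ∈ T, v i ^ 2) := by
  simp [l2, restr, sum_ite_mem]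

lemma l2_nonneg (v : Fin p → ℝ) : 0 ≤ l2 v := Real.sqrt_nonneg _

lemma l2_pos {v : Fin p → ℝ} (hv : v ≠ 0) : 0 < l2 v := by
  obtain ⟨i, hi⟩ := Function.ne_iff.1 hv
  exact Real.sqrt_pos.2 (sum_pos' (fun j _ => sq_nonneg _) ⟨i, mem_univ _, sq_pos_iff.2 hi⟩)

lemma eq_zero_of_l1_nonpos {v : Fin p → ℝ} (hv : l1 v ≤ 0) : v = 0 := by
  have hsum := le_antisymm hv (sum_nonneg fun i _ => abs_nonneg (v i))
  funext i
  exact abs_eq_zero.1 ((sum_eq_zero_iff_of_nonneg fun j _ => abs_nonneg (v j)).1 hsum i (mem_univ i))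

lemma l2_restr_mono {T T' : Finset (Fin p)} (h : T ⊆ T') (v : Fin p → ℝ) :
    l2 (restr T v) ≤ l2 (restr T' v) := by
  rw [l2_restr, l2_restr]
  exact Real.sqrt_le_sqrt (sum_le_sum_of_subset_of_nonneg h fun i _ _ => sq_nonneg _)

lemma restr_add_restr_compl (T : Finset (Fin p)) (v : Fin p → ℝ) : restr T v + restr Tᶜ v = v := by
  funext i
  by_cases hi : i ∈ T <;> simp [restr, hi]

lemma l1_restr_add_l1_restr_compl (T : Finset (Fin p)) (v : Fin p → ℝ) :
    l1 (restr T v) + l1 (restr Tᶜ v) = l1 v := by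
  rw [l1_restr, l1_restr, l1]
  exact sum_add_sum_compl T _

lemma restr_ne_zero_of_cone {k0 : ℝ} {J : Finset (Fin p)} {v : Fin p → ℝ} (hv : v ≠ 0)
    (hcone : l1 (restr Jᶜ v) ≤ k0 * l1 (restr J v)) : restr J v ≠ 0 := by
  intro hJ
  have hJc : restr Jᶜ v = 0 := eq_zero_of_l1_nonpos (by simpa [hJ, l1] using hcone)
  exact hv (by rw [← restr_add_restr_compl J v, hJ, hJc, add_zero])

lemma exists_top_cone {k0 : ℝ} (hk0 : 0 ≤ k0) {J : Finset (Fin p)} {v : Fin p → ℝ} (hv : v ≠ 0)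
    (hcone : l1 (restr Jᶜ v) ≤ k0 * l1 (restr J v)) :
    ∃ T : Finset (Fin p), #T = #J ∧ l1 (restr Tᶜ v) ≤ k0 * l1 (restr T v) ∧
      ∑ i, v i ^ 2 ≤ (1 + k0) * ∑ i ∈ T, v i ^ 2 := by
  obtain ⟨T, -, hTcard, hTtop⟩ :=
    exists_subset_card_eq_forall_le univ (fun i => |v i|) (card_le_univ J)
  have htop : ∀ i ∈ T, ∀ j ∉ T, |v j| ≤ |v i| := fun i hi j hj => hTtop i hi j (mem_univ j) hj
  have hJT : l1 (restr J v) ≤ l1 (restr T v) := by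
    rw [l1_restr, l1_restr]
    exact sum_le_sum_of_card_le_of_forall_le (fun i => abs_nonneg _) hTcard.ge htop
  have hTcone : l1 (restr Tᶜ v) ≤ k0 * l1 (restr T v) := by
    have := mul_le_mul_of_nonneg_left hJT hk0
    linarith [l1_restr_add_l1_restr_compl T v, l1_restr_add_l1_restr_compl J v]
  have hT : T.Nonempty := by
    rw [← card_pos, hTcard, card_pos, nonempty_iff_ne_empty]
    rintro rfl
    exact restr_ne_zero_of_cone hv hcone (funext fun i => by simp [restr])
  refine ⟨T, hTcard, hTcone, ?_⟩
  have hcompl : ∑ j ∈ Tᶜ, v j ^ 2 ≤ k0 * ∑ i ∈ T, v i ^ 2 := by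
    rw [l1_restr, l1_restr] at hTcone
    exact sum_sq_le_mul_sum_sq_of_forall_abs_le hk0 hT
      (fun i hi j hj => htop i hi j (mem_compl.1 hj)) hTcone
  linarith [sum_add_sum_compl T fun i => v i ^ 2]

end Norms

lemma div_mul_le_div_mul_of_le {a t d d' : ℝ} (hat : 0 ≤ a / t) (hd : 0 < d) (h : d ≤ d') :
    a / (t * d') ≤ a / (t * d) := by
  simp only [div_mul_eq_div_div]
  exact div_le_div_of_nonneg_left hat hd h

lemma div_mul_le_mul_div_mul_of_le {a t c d d' : ℝ} (hat : 0 ≤ a / t) (hd : 0 < d) (hd' : 0 < d')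
    (h : d' ≤ c * d) : a / (t * d) ≤ c * (a / (t * d')) := by
  simp only [div_mul_eq_div_div]
  rw [mul_div_assoc', div_le_div_iff₀ hd hd']
  nlinarith [mul_le_mul_of_nonneg_left h hat]

lemma csInf_le_mul_csInf {S T : Set ℝ} {c : ℝ} (hc : 0 < c) (hS : S.Nonempty) (hT : BddBelow T)
    (h : ∀ r ∈ S, ∃ r' ∈ T, r' ≤ c * r) : sInf T ≤ c * sInf S := by
  rw [← div_le_iff₀' hc]
  refine le_csInf hS fun r hr => ?_
  obtain ⟨r', hr', hle⟩ := h r hr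
  rw [div_le_iff₀' hc]
  exact (csInf_le hT hr').trans hle

section Ratios

variable {n p s : ℕ} {k0 : ℝ} (X : Matrix (Fin n) (Fin p) ℝ)

lemma div_sqrt_mul_l2_nonneg (v w : Fin p → ℝ) :
    0 ≤ l2 (X.mulVec v) / (√n * l2 w) :=
  div_nonneg (l2_nonneg _) (mul_nonneg (Real.sqrt_nonneg _) (l2_nonneg _))

lemma bddBelow_ratios1 : BddBelow (ratios1 n p s k0 X) :=
  ⟨0, by rintro _ ⟨J0, v, -, -, -, rfl⟩; exact div_sqrt_mul_l2_nonneg X v _⟩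

lemma bddBelow_ratiosM (m : ℕ) : BddBelow (ratiosM n p s m k0 X) :=
  ⟨0, by rintro _ ⟨J0, Jm, v, -, -, -, -, -, -, rfl⟩; exact div_sqrt_mul_l2_nonneg X v _⟩

lemma exists_mem_ratiosM_le (m : ℕ) {r : ℝ} (hr : r ∈ ratios1 n p s k0 X) :
    ∃ r' ∈ ratiosM n p s m k0 X, r' ≤ r := by
  obtain ⟨J0, v, hJ0, hv, hcone, rfl⟩ := hr
  obtain ⟨Jm, hJm, hJmcard, hJmtop⟩ := exists_subset_card_eq_forall_le J0ᶜ (fun i => |v i|)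
    (k := min m (p - #J0)) (by simp)
  refine ⟨_, ⟨J0, Jm, v, hJ0, hv, hcone, hJmcard, disjoint_left.2 fun i hi => mem_compl.1 (hJm hi),
    fun i hi j hj hjm => hJmtop i hi j (mem_compl.2 hj) hjm, rfl⟩, ?_⟩
  exact div_mul_le_div_mul_of_le (div_nonneg (l2_nonneg _) (Real.sqrt_nonneg _))
    (l2_pos (restr_ne_zero_of_cone hv hcone)) (l2_restr_mono subset_union_left v)

lemma exists_mem_ratios1_le {m : ℕ} (hk0 : 0 ≤ k0) {r' : ℝ} (hr' : r' ∈ ratiosM n p s m k0 X) :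
    ∃ r ∈ ratios1 n p s k0 X, r ≤ √(2 + k0 ^ 2) * r' := by
  obtain ⟨J0, Jm, v, hJ0, hv, hcone, -, -, -, rfl⟩ := hr'
  obtain ⟨T, hTcard, hTcone, hsq⟩ := exists_top_cone hk0 hv hcone
  refine ⟨_, ⟨T, v, hTcard.trans_le hJ0, hv, hTcone, rfl⟩, ?_⟩
  have hl2 : l2 (restr (J0 ∪ Jm) v) ≤ √(2 + k0 ^ 2) * l2 (restr T v) := by
    rw [l2_restr, l2_restr, ← Real.sqrt_mul (by positivity)]
    refine Real.sqrt_le_sqrt ?_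
    calc ∑ i ∈ J0 ∪ Jm, v i ^ 2 ≤ ∑ i, v i ^ 2 :=
          sum_le_univ_sum_of_nonneg fun i => sq_nonneg _
      _ ≤ (1 + k0) * ∑ i ∈ T, v i ^ 2 := hsq
      _ ≤ (2 + k0 ^ 2) * ∑ i ∈ T, v i ^ 2 :=
          mul_le_mul_of_nonneg_right (by nlinarith [sq_nonneg (k0 - 1)])
            (sum_nonneg fun i _ => sq_nonneg _)
  have hJ0pos := l2_pos (restr_ne_zero_of_cone hv hcone)
  have hTpos := l2_pos (restr_ne_zero_of_cone hv hTcone)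
  exact div_mul_le_mul_div_mul_of_le (div_nonneg (l2_nonneg _) (Real.sqrt_nonneg _)) hTpos
    (hJ0pos.trans_le (l2_restr_mono subset_union_left v)) hl2

end Ratios

theorem stmt5_general (n p s m : ℕ) (k0 : ℝ)
    (hk0 : 0 < k0) (X : Matrix (Fin n) (Fin p) ℝ)
    (hRE : 0 < sInf (ratios1 n p s k0 X)) :
    Kre n p s k0 X ≤ KreM n p s m k0 X ∧
      KreM n p s m k0 X ≤ Real.sqrt (2 + k0 ^ 2) * Kre n p s k0 X := by
  have hc : 0 < √(2 + k0 ^ 2) := by positivity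
  have hne1 : (ratios1 n p s k0 X).Nonempty :=
    Set.nonempty_iff_ne_empty.2 fun h => by simp [h] at hRE
  have hneM : (ratiosM n p s m k0 X).Nonempty :=
    let ⟨_, hr⟩ := hne1
    let ⟨r', hr', _⟩ := exists_mem_ratiosM_le X m hr
    ⟨r', hr'⟩
  have hM1 : sInf (ratiosM n p s m k0 X) ≤ sInf (ratios1 n p s k0 X) := by
    simpa using csInf_le_mul_csInf one_pos hne1 (bddBelow_ratiosM X m) fun r hr => by
      simpa using exists_mem_ratiosM_le X m hr
  have h1M : sInf (ratios1 n p s k0 X) ≤ √(2 + k0 ^ 2) * sInf (ratiosM n p s m k0 X) :=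
    csInf_le_mul_csInf hc hneM (bddBelow_ratios1 X) fun _ hr' => exists_mem_ratios1_le X hk0.le hr'
  have hMpos : 0 < sInf (ratiosM n p s m k0 X) := (mul_pos_iff_of_pos_left hc).1 (hRE.trans_le h1M)
  refine ⟨inv_anti₀ hMpos hM1, ?_⟩
  calc (sInf (ratiosM n p s m k0 X))⁻¹ ≤ (sInf (ratios1 n p s k0 X) / √(2 + k0 ^ 2))⁻¹ :=
        inv_anti₀ (div_pos hRE hc) ((div_le_iff₀' hc).2 h1M)
    _ = √(2 + k0 ^ 2) * (sInf (ratios1 n p s k0 X))⁻¹ := by rw [inv_div, div_eq_mul_inv]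

/-- K(s,k₀,X) ≤ K(s,m,k₀,X) ≤ √(2+k₀²) · K(s,k₀,X). -/
theorem stmt5 (n p s m : ℕ) (k0 : ℝ) (hn : 1 ≤ n) (hs : 1 ≤ s) (hsp : 2 * s ≤ p)
    (hm : s ≤ m) (hmp : s + m ≤ p)
    (hk0 : 0 < k0) (X : Matrix (Fin n) (Fin p) ℝ)
    (hRE : 0 < sInf (ratios1 n p s k0 X)) :
    Kre n p s k0 X ≤ KreM n p s m k0 X ∧
      KreM n p s m k0 X ≤ Real.sqrt (2 + k0 ^ 2) * Kre n p s k0 X :=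
  stmt5_general n p s m k0 hk0 X hRE
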